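/- Let Φ be the class of all 𝔥-homogeneous functions X → L. Then for every f : X → L one has lE_Φ f = f∧ ≤ f ≤ f∨ = uE_Φ f pointwise. (Theorem 3, part I.) -/

import Mathlib

/-! `f∧` is itself `𝔥`-homogeneous (reindex the infimum by `k = j * h⁻¹`, and pull `𝔥 h` out of it,
which is allowed because a monotone group action on a complete lattice acts by order
isomorphisms), lies below `f` (take `h = 1`), and dominates every homogeneous minorant `φ` of `f`
(apply `(𝔥 h)⁻¹ •` to `φ (h • x) ≤ f (h • x)`). So it is the greatest homogeneous minorant, which is
exactly the lower envelope; dually for `f∨`. -/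

/-- `f : X → L` is `𝔥`-homogeneous: `f (h • x) = 𝔥 h • f x`. -/
def IsHomog {H T X L : Type*} [Monoid H] [Monoid T] [MulAction H X]
    [SMul T L] (𝔥 : H →* T) (f : X → L) : Prop :=
  ∀ (h : H) (x : X), f (h • x) = 𝔥 h • f x

/-- The lower `Φ`-envelope `lE_Φ f : x ↦ ⨆ {φ x | φ ∈ Φ, φ ≤ f}`. -/
def lowE {X L : Type*} [CompleteLattice L] (Φ : Set (X → L)) (f : X → L) : X → L :=
  fun x => ⨆ φ ∈ {φ ∈ Φ | φ ≤ f}, φ x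

/-- The upper `Φ`-envelope `uE_Φ f : x ↦ ⨅ {φ x | φ ∈ Φ, f ≤ φ}`. -/
def uppE {X L : Type*} [CompleteLattice L] (Φ : Set (X → L)) (f : X → L) : X → L :=
  fun x => ⨅ φ ∈ {φ ∈ Φ | f ≤ φ}, φ x

/-- The regularized minorant `f∧(x) := ⨅ h, (𝔥 h)⁻¹ • f (h • x)`. -/
def regMin {H T X L : Type*} [Monoid H] [Group T] [MulAction H X]
    [CompleteLattice L] [MulAction T L] (𝔥 : H →* T) (f : X → L) : X → L :=
  fun x => ⨅ h : H, (𝔥 h)⁻¹ • f (h • x)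

/-- The regularized majorant `f∨(x) := ⨆ h, (𝔥 h)⁻¹ • f (h • x)`. -/
def regMaj {H T X L : Type*} [Monoid H] [Group T] [MulAction H X]
    [CompleteLattice L] [MulAction T L] (𝔥 : H →* T) (f : X → L) : X → L :=
  fun x => ⨆ h : H, (𝔥 h)⁻¹ • f (h • x)

section Envelope

variable {X L : Type*} [CompleteLattice L] {Φ : Set (X → L)} {f g : X → L}

theorem lowE_eq_of_isGreatest (hg : IsGreatest {φ ∈ Φ | φ ≤ f} g) : lowE Φ f = g :=
  funext fun x => le_antisymm (iSup₂_le fun _ hφ => hg.2 hφ x) (le_iSup₂_of_le g hg.1 le_rfl)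

theorem uppE_eq_of_isLeast (hg : IsLeast {φ ∈ Φ | f ≤ φ} g) : uppE Φ f = g :=
  funext fun x => le_antisymm (iInf₂_le_of_le g hg.1 le_rfl) (le_iInf₂ fun _ hφ => hg.2 hφ x)

end Envelope

section MonotoneAction

variable {T L : Type*} [Group T] [MulAction T L]

def smulOrderIso [Preorder L] (hmono : ∀ (t : T) (s₁ s₂ : L), s₁ ≤ s₂ → t • s₁ ≤ t • s₂)
    (t : T) : L ≃o L :=
  (MulAction.toPerm t).toOrderIso (fun _ _ => hmono t _ _) (fun _ _ => hmono t⁻¹ _ _)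

variable [CompleteLattice L] (hmono : ∀ (t : T) (s₁ s₂ : L), s₁ ≤ s₂ → t • s₁ ≤ t • s₂)
include hmono

theorem smul_iInf_of_monotone {ι : Sort*} (t : T) (g : ι → L) : t • ⨅ i, g i = ⨅ i, t • g i :=
  (smulOrderIso hmono t).map_iInf g

theorem smul_iSup_of_monotone {ι : Sort*} (t : T) (g : ι → L) : t • ⨆ i, g i = ⨆ i, t • g i :=
  (smulOrderIso hmono t).map_iSup g

end MonotoneAction

section Regularization

variable {H T X L : Type*} [Group T] [MulAction T L]

section Monoid

variable [CompleteLattice L] [Monoid H] [MulAction H X] (𝔥 : H →* T) (f : X → L)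

theorem regMin_le : regMin 𝔥 f ≤ f := fun x =>
  (iInf_le _ 1).trans_eq (by rw [map_one, inv_one, one_smul, one_smul])

theorem le_regMaj : f ≤ regMaj 𝔥 f := fun x =>
  (le_iSup _ 1).trans_eq' (by rw [map_one, inv_one, one_smul, one_smul])

variable (hmono : ∀ (t : T) (s₁ s₂ : L), s₁ ≤ s₂ → t • s₁ ≤ t • s₂)
include hmono

theorem le_regMin_of_isHomog {φ : X → L} (hφ : IsHomog 𝔥 φ) (hφf : φ ≤ f) :
    φ ≤ regMin 𝔥 f := fun x =>
  le_iInf fun h => by simpa [hφ h x] using hmono (𝔥 h)⁻¹ _ _ (hφf (h • x))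

theorem regMaj_le_of_isHomog {φ : X → L} (hφ : IsHomog 𝔥 φ) (hfφ : f ≤ φ) :
    regMaj 𝔥 f ≤ φ := fun x =>
  iSup_le fun h => by simpa [hφ h x] using hmono (𝔥 h)⁻¹ _ _ (hfφ (h • x))

end Monoid

variable [Group H] [MulAction H X] (𝔥 : H →* T) (f : X → L)

theorem map_mul_inv_inv_smul_mul_inv_smul (h j : H) (x : X) :
    (𝔥 (j * h⁻¹))⁻¹ • f ((j * h⁻¹) • h • x) = 𝔥 h • (𝔥 j)⁻¹ • f (j • x) := by
  rw [map_mul, map_inv, mul_inv_rev, inv_inv, mul_smul, mul_smul, inv_smul_smul]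

variable [CompleteLattice L] (hmono : ∀ (t : T) (s₁ s₂ : L), s₁ ≤ s₂ → t • s₁ ≤ t • s₂)
include hmono

theorem isHomog_regMin : IsHomog 𝔥 (regMin 𝔥 f) := fun h x => by
  simp only [regMin, smul_iInf_of_monotone hmono, ← map_mul_inv_inv_smul_mul_inv_smul]
  exact ((Equiv.mulRight h⁻¹).iInf_comp (g := fun k => (𝔥 k)⁻¹ • f (k • h • x))).symm

theorem isHomog_regMaj : IsHomog 𝔥 (regMaj 𝔥 f) := fun h x => by
  simp only [regMaj, smul_iSup_of_monotone hmono, ← map_mul_inv_inv_smul_mul_inv_smul]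
  exact ((Equiv.mulRight h⁻¹).iSup_comp (g := fun k => (𝔥 k)⁻¹ • f (k • h • x))).symm

theorem isGreatest_regMin : IsGreatest {φ ∈ {φ | IsHomog 𝔥 φ} | φ ≤ f} (regMin 𝔥 f) :=
  ⟨⟨isHomog_regMin 𝔥 f hmono, regMin_le 𝔥 f⟩,
    fun _ hφ => le_regMin_of_isHomog 𝔥 f hmono hφ.1 hφ.2⟩

theorem isLeast_regMaj : IsLeast {φ ∈ {φ | IsHomog 𝔥 φ} | f ≤ φ} (regMaj 𝔥 f) :=
  ⟨⟨isHomog_regMaj 𝔥 f hmono, le_regMaj 𝔥 f⟩,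
    fun _ hφ => regMaj_le_of_isHomog 𝔥 f hmono hφ.1 hφ.2⟩

end Regularization

/-- **Theorem 3, part I.** For the class `Φ` of all `𝔥`-homogeneous functions,
`lE_Φ f = f∧ ≤ f ≤ f∨ = uE_Φ f` pointwise. -/
theorem thm3_I {H T X L : Type*} [Group H] [Group T] [MulAction H X]
    [CompleteLattice L] [MulAction T L] (𝔥 : H →* T)
    (hmono : ∀ (t : T) (s₁ s₂ : L), s₁ ≤ s₂ → t • s₁ ≤ t • s₂)
    (f : X → L) :
    lowE {φ | IsHomog 𝔥 φ} f = regMin 𝔥 f ∧ regMin 𝔥 f ≤ f ∧ f ≤ regMaj 𝔥 f ∧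
      regMaj 𝔥 f = uppE {φ | IsHomog 𝔥 φ} f :=
  ⟨lowE_eq_of_isGreatest (isGreatest_regMin 𝔥 f hmono), regMin_le 𝔥 f, le_regMaj 𝔥 f,
    (uppE_eq_of_isLeast (isLeast_regMaj 𝔥 f hmono)).symm⟩
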